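/- arXiv:2408.03034 — 5 statements merged into one kernel-verified Lean document; each statement's English description precedes it below -/
import Mathlib

section
/- Let X be a nonempty set, T : X → X, and L ∈ (0,1). Suppose there exists a function f : X → [0,∞) such that f⁻¹({0}) is a singleton and f(Tx) ≤ L·f(x) for all x. Then there exists a complete metric d on X such that d(Tx,Ty) ≤ L·d(x,y) for all x,y ∈ X. -/
open Filter Topology

/-- If there is `f : X → [0,∞)` with `f⁻¹({0})` a singleton and `f (T x) ≤ L * f x`,
then there exists a complete metric on `X` making `T` an `L`-contraction. -/
theorem stmt3 {X : Type*} (T : X → X) (L : ℝ) (hL0 : 0 < L) (hL1 : L < 1)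
    (f : X → ℝ) (hf0 : ∀ x, 0 ≤ f x) (hsing : ∃! x : X, f x = 0)
    (hT : ∀ x, f (T x) ≤ L * f x) :
    ∃ m : MetricSpace X, @CompleteSpace X m.toUniformSpace ∧
      ∀ x y : X, m.dist (T x) (T y) ≤ L * m.dist x y := by
  classical
  obtain ⟨x₀, hx₀, hx₀u⟩ := hsing
  set d : X → X → ℝ := fun x y => if x = y then 0 else f x + f y with hd
  have dself : ∀ x, d x x = 0 := fun x => if_pos rfl
  have dcomm : ∀ x y, d x y = d y x := by
    intro x y
    by_cases h : x = y
    · subst h; rfl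
    · simp [d, h, Ne.symm h, add_comm]
  have dnonneg : ∀ x y, 0 ≤ d x y := by
    intro x y
    by_cases h : x = y <;> simp only [d, h, if_pos, if_neg, not_false_iff, le_refl, if_true]
    exact add_nonneg (hf0 x) (hf0 y)
  have dtri : ∀ x y z, d x z ≤ d x y + d y z := by
    intro x y z
    by_cases hxz : x = z
    · subst hxz
      simp only [dself]
      exact add_nonneg (dnonneg _ _) (dnonneg _ _)
    · by_cases hxy : x = y
      · subst hxy
        simp [dself, hxz]
      · by_cases hyz : y = z
        · subst hyz
          simp [dself, hxz]
        · simp only [d, if_neg hxz, if_neg hxy, if_neg hyz]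
          have := hf0 y
          linarith
  have deq : ∀ x y, d x y = 0 → x = y := by
    intro x y h
    by_contra hxy
    simp only [d, if_neg hxy] at h
    have h1 : f x = 0 := le_antisymm (by linarith [hf0 y]) (hf0 x)
    have h2 : f y = 0 := le_antisymm (by linarith [hf0 x]) (hf0 y)
    exact hxy ((hx₀u x h1).trans (hx₀u y h2).symm)
  letI m : MetricSpace X :=
    { dist := d
      dist_self := dself
      dist_comm := dcomm
      dist_triangle := dtri
      eq_of_dist_eq_zero := deq _ _ }
  have hdist : ∀ x y, dist x y = d x y := fun _ _ => rfl
  refine ⟨m, ?_, ?_⟩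
  · -- completeness
    apply Metric.complete_of_cauchySeq_tendsto
    intro u hu
    by_cases hec : ∃ N, ∀ n ≥ N, u n = u N
    · obtain ⟨N, hN⟩ := hec
      refine ⟨u N, ?_⟩
      rw [Metric.tendsto_atTop]
      intro ε hε
      exact ⟨N, fun n hn => by rw [hN n hn, dist_self]; exact hε⟩
    · push_neg at hec
      refine ⟨x₀, ?_⟩
      rw [Metric.tendsto_atTop]
      intro ε hε
      obtain ⟨N, hN⟩ := Metric.cauchySeq_iff.1 hu ε hε
      refine ⟨N, fun n hn => ?_⟩
      obtain ⟨k, hk, hku⟩ := hec n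
      have hfn : f (u n) < ε := by
        have := hN n hn k (le_trans hn hk)
        rw [hdist] at this
        have this : (if u n = u k then 0 else f (u n) + f (u k)) < ε := this
        rw [if_neg (fun h => hku h.symm)] at this
        have := hf0 (u k); linarith
      calc dist (u n) x₀ ≤ f (u n) := by
            by_cases h : u n = x₀
            · rw [h, dist_self]; exact hf0 _
            · rw [hdist]; simp [d, h, hx₀]
        _ < ε := hfn
  · -- contraction
    intro x y
    by_cases hxy : T x = T y
    · rw [show m.dist (T x) (T y) = dist (T x) (T y) from rfl, hxy, dist_self]
      exact mul_nonneg hL0.le (dnonneg x y)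
    · have hxy' : x ≠ y := fun h => hxy (by rw [h])
      show d (T x) (T y) ≤ L * d x y
      simp only [d, if_neg hxy, if_neg hxy']
      calc f (T x) + f (T y) ≤ L * f x + L * f y := add_le_add (hT x) (hT y)
        _ = L * (f x + f y) := by ring
end

section
/- Let X be a lattice in ℝⁿ (pointwise max/min), Γ : S → 2^A a supermodular correspondence between lattices (meaning a' ∈ Γ(s'), a'' ∈ Γ(s'') imply a'∨a'' ∈ Γ(s'∨s'') and a'∧a'' ∈ Γ(s'∧s'')), and h : Gr Γ → ℝ supermodular on the lattice Gr Γ. Then m(s) = sup_{a ∈ Γ(s)} h(s,a) is supermodular on S. -/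
/-- Preservation of supermodularity under maximization: if `Γ` is a supermodular
correspondence between lattices with nonempty values, and `h` is supermodular on
the graph of `Γ` (with the suprema below finite), then
`m s = sup_{a ∈ Γ s} h (s,a)` is supermodular. -/
theorem stmt9 {S A : Type*} [Lattice S] [Lattice A]
    (Γ : S → Set A) (hΓne : ∀ s, (Γ s).Nonempty)
    (hΓsuper : ∀ s s' a a', a ∈ Γ s → a' ∈ Γ s' →
      a ⊔ a' ∈ Γ (s ⊔ s') ∧ a ⊓ a' ∈ Γ (s ⊓ s'))
    (h : S → A → ℝ)
    (hbdd : ∀ s, BddAbove ((fun a => h s a) '' Γ s))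
    (hsuper : ∀ s s' a a', a ∈ Γ s → a' ∈ Γ s' →
      h s a + h s' a' ≤ h (s ⊔ s') (a ⊔ a') + h (s ⊓ s') (a ⊓ a')) :
    ∀ s s' : S,
      sSup ((fun a => h s a) '' Γ s) + sSup ((fun a => h s' a) '' Γ s') ≤
      sSup ((fun a => h (s ⊔ s') a) '' Γ (s ⊔ s')) +
        sSup ((fun a => h (s ⊓ s') a) '' Γ (s ⊓ s')) := by
  intro s s'
  have key : ∀ a ∈ Γ s, ∀ a' ∈ Γ s',
      h s a + h s' a' ≤
      sSup ((fun a => h (s ⊔ s') a) '' Γ (s ⊔ s')) +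
        sSup ((fun a => h (s ⊓ s') a) '' Γ (s ⊓ s')) := by
    intro a ha a' ha'
    refine (hsuper s s' a a' ha ha').trans (add_le_add ?_ ?_)
    · exact le_csSup (hbdd _) ⟨a ⊔ a', (hΓsuper s s' a a' ha ha').1, rfl⟩
    · exact le_csSup (hbdd _) ⟨a ⊓ a', (hΓsuper s s' a a' ha ha').2, rfl⟩
  rw [← le_sub_iff_add_le']
  refine csSup_le ((hΓne s').image _) ?_
  rintro x ⟨a', ha', rfl⟩
  rw [le_sub_iff_add_le, add_comm, ← le_sub_iff_add_le]
  refine csSup_le ((hΓne s).image _) ?_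
  rintro y ⟨a, ha, rfl⟩
  rw [le_sub_iff_add_le]
  linarith [key a ha a' ha']
end

section
/- Let X ⊆ ℝⁿ be a lattice, E a partially ordered set, Λ(e) ⊆ X nonempty, compact for each e ∈ E, and ascending, and f : X × E → ℝ supermodular in x, with increasing differences in (x,e), and upper semi-continuous in x. Then the argmax correspondence G(e) = argmax_{x ∈ Λ(e)} f(x,e) is nonempty for each e and ascending: if e'' ⪰ e', x' ∈ G(e'), x'' ∈ G(e''), then x'∨x'' ∈ G(e'') and x'∧x'' ∈ G(e'). -/
open Filter Topology

lemma usc_exists_max {m : ℕ} {s : Set (Fin m → ℝ)} (hs : IsCompact s)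
    (hne : s.Nonempty) {g : (Fin m → ℝ) → ℝ} (hg : UpperSemicontinuousOn g s) :
    ∃ x ∈ s, ∀ y ∈ s, g y ≤ g x := by
  have hbdd : BddAbove (g '' s) := by
    by_contra hb
    have hk : ∀ k : ℕ, ∃ x ∈ s, (k : ℝ) < g x := by
      intro k
      rcases not_bddAbove_iff.1 hb (k : ℝ) with ⟨_, ⟨x, hx, rfl⟩, h⟩
      exact ⟨x, hx, h⟩
    choose u hu hgu using hk
    obtain ⟨a, ha, φ, hφ, hconv⟩ := hs.tendsto_subseq hu
    have hmem : Tendsto (u ∘ φ) atTop (𝓝[s] a) :=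
      tendsto_nhdsWithin_of_tendsto_nhds_of_eventually_within _ hconv
        (Eventually.of_forall fun k => hu (φ k))
    have h1 : ∀ᶠ k in atTop, g (u (φ k)) < g a + 1 :=
      hmem.eventually (hg a ha (g a + 1) (lt_add_one _))
    obtain ⟨N, hN⟩ := exists_nat_ge (g a + 1)
    obtain ⟨k, hk1, hk2⟩ := (h1.and (eventually_ge_atTop N)).exists
    have h3 : (k : ℝ) ≤ (φ k : ℝ) := Nat.cast_le.2 (hφ.le_apply)
    have h4 : (N : ℝ) ≤ (k : ℝ) := Nat.cast_le.2 hk2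
    have := hgu (φ k)
    linarith
  set M := sSup (g '' s) with hMdef
  have hM : ∀ y ∈ s, g y ≤ M := fun y hy => le_csSup hbdd ⟨y, hy, rfl⟩
  have hex : ∀ k : ℕ, ∃ x ∈ s, M - 1/((k:ℝ)+1) < g x := by
    intro k
    have : M - 1/((k:ℝ)+1) < M := sub_lt_self M (by positivity)
    obtain ⟨_, ⟨x, hx, rfl⟩, h⟩ := exists_lt_of_lt_csSup (hne.image g) this
    exact ⟨x, hx, h⟩
  choose u hu hgu using hex
  obtain ⟨a, ha, φ, hφ, hconv⟩ := hs.tendsto_subseq hu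
  have hmem : Tendsto (u ∘ φ) atTop (𝓝[s] a) :=
    tendsto_nhdsWithin_of_tendsto_nhds_of_eventually_within _ hconv
      (Eventually.of_forall fun k => hu (φ k))
  refine ⟨a, ha, fun y hy => (hM y hy).trans ?_⟩
  by_contra hlt
  push_neg at hlt
  obtain ⟨c, hc1, hc2⟩ := exists_between hlt
  have h1 : ∀ᶠ k in atTop, g (u (φ k)) < c := hmem.eventually (hg a ha c hc1)
  have h2 : ∀ᶠ k : ℕ in atTop, 1/((k:ℝ)+1) < M - c :=
    (tendsto_one_div_add_atTop_nhds_zero_nat).eventually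
      (tendsto_id.eventually_lt_const (by linarith))
  obtain ⟨k, hk1, hk2⟩ := (h1.and h2).exists
  have h3 : 1/((φ k:ℝ)+1) ≤ 1/((k:ℝ)+1) := by
    apply one_div_le_one_div_of_le (by positivity)
    have : (k : ℝ) ≤ (φ k : ℝ) := Nat.cast_le.2 hφ.le_apply
    linarith
  have := hgu (φ k)
  linarith

/-- Topkis's monotonicity theorem: with `X ⊆ ℝⁿ` a (sub)lattice, `E` a poset,
`Λ e ⊆ X` nonempty, compact and ascending, and `f` supermodular in `x`, with
increasing differences in `(x,e)` and u.s.c. in `x`, the argmax correspondence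
`G e = argmax_{x ∈ Λ e} f x e` is nonempty-valued and ascending. -/
theorem stmt10 {n : ℕ} {E : Type*} [PartialOrder E]
    (X : Set (Fin n → ℝ))
    (hX : ∀ x ∈ X, ∀ y ∈ X, x ⊔ y ∈ X ∧ x ⊓ y ∈ X)
    (Λ : E → Set (Fin n → ℝ))
    (hΛX : ∀ e, Λ e ⊆ X)
    (hΛne : ∀ e, (Λ e).Nonempty) (hΛcpt : ∀ e, IsCompact (Λ e))
    (hasc : ∀ e₁ e₂, e₁ ≤ e₂ → ∀ x ∈ Λ e₂, ∀ x' ∈ Λ e₁,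
      x ⊔ x' ∈ Λ e₂ ∧ x ⊓ x' ∈ Λ e₁)
    (f : (Fin n → ℝ) → E → ℝ)
    (hsuper : ∀ e, ∀ x ∈ X, ∀ x' ∈ X,
      f x e + f x' e ≤ f (x ⊔ x') e + f (x ⊓ x') e)
    (hid : ∀ x₁ ∈ X, ∀ x₂ ∈ X, x₁ ≤ x₂ → ∀ e₁ e₂ : E, e₁ ≤ e₂ →
      f x₁ e₂ - f x₁ e₁ ≤ f x₂ e₂ - f x₂ e₁)
    (husc : ∀ e, UpperSemicontinuousOn (fun x => f x e) X) :
    (∀ e, ({x ∈ Λ e | ∀ y ∈ Λ e, f y e ≤ f x e}).Nonempty) ∧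
    (∀ e' e'' : E, e' ≤ e'' →
      ∀ x' ∈ {x ∈ Λ e' | ∀ y ∈ Λ e', f y e' ≤ f x e'},
      ∀ x'' ∈ {x ∈ Λ e'' | ∀ y ∈ Λ e'', f y e'' ≤ f x e''},
        x' ⊔ x'' ∈ {x ∈ Λ e'' | ∀ y ∈ Λ e'', f y e'' ≤ f x e''} ∧
        x' ⊓ x'' ∈ {x ∈ Λ e' | ∀ y ∈ Λ e', f y e' ≤ f x e'}) := by
  constructor
  · intro e
    obtain ⟨x, hx, hmax⟩ := usc_exists_max (hΛcpt e) (hΛne e)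
      ((husc e).mono (hΛX e))
    exact ⟨x, hx, hmax⟩
  · intro e' e'' hee x' hx' x'' hx''
    obtain ⟨hx'Λ, hx'max⟩ := hx'
    obtain ⟨hx''Λ, hx''max⟩ := hx''
    have hx'X : x' ∈ X := hΛX e' hx'Λ
    have hx''X : x'' ∈ X := hΛX e'' hx''Λ
    obtain ⟨hsupΛ, hinfΛ⟩ := hasc e' e'' hee x'' hx''Λ x' hx'Λ
    rw [sup_comm] at hsupΛ
    rw [inf_comm] at hinfΛ
    have hsupX : x' ⊔ x'' ∈ X := (hX _ hx'X _ hx''X).1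
    have hinfX : x' ⊓ x'' ∈ X := (hX _ hx'X _ hx''X).2
    have h1 : f x' e' + f x'' e' ≤ f (x' ⊔ x'') e' + f (x' ⊓ x'') e' :=
      hsuper e' x' hx'X x'' hx''X
    have h2 : f (x' ⊓ x'') e' ≤ f x' e' := hx'max _ hinfΛ
    have h3 : f x'' e'' - f x'' e' ≤ f (x' ⊔ x'') e'' - f (x' ⊔ x'') e' :=
      hid x'' hx''X _ hsupX le_sup_right e' e'' hee
    have h4 : f (x' ⊔ x'') e'' ≤ f x'' e'' := hx''max _ hsupΛ
    refine ⟨⟨hsupΛ, fun y hy => ?_⟩, ⟨hinfΛ, fun y hy => ?_⟩⟩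
    · have := hx''max y hy; linarith
    · have := hx'max y hy; linarith
end

section
/- Let S, A be lattices, E a partially ordered set, Γ : S → 2^A a supermodular correspondence with Γ(s) compact for each s, and h : S × A × E → ℝ bounded, supermodular in (s,a), and with increasing differences in ((s,a),e). Then m(s,e) = max_{a ∈ Γ(s)} h(s,a,e) has increasing differences in (s,e). -/
/-- Preservation of increasing differences under maximization: if `Γ` is a
supermodular, compact- and nonempty-valued correspondence between lattices, and
`h` is bounded, supermodular in `(s,a)` and has increasing differences in
`((s,a),e)`, then `m (s,e) = max_{a ∈ Γ s} h s a e` has increasing differences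
in `(s,e)`. -/
theorem stmt11 {S A E : Type*} [Lattice S] [Lattice A] [PartialOrder E]
    [TopologicalSpace A]
    (Γ : S → Set A) (hΓcpt : ∀ s, IsCompact (Γ s)) (hΓne : ∀ s, (Γ s).Nonempty)
    (hΓsuper : ∀ s s' a a', a ∈ Γ s → a' ∈ Γ s' →
      a ⊔ a' ∈ Γ (s ⊔ s') ∧ a ⊓ a' ∈ Γ (s ⊓ s'))
    (h : S → A → E → ℝ) (hbdd : ∃ C, ∀ s a e, |h s a e| ≤ C)
    (hsuper : ∀ e s s' a a',
      h s a e + h s' a' e ≤ h (s ⊔ s') (a ⊔ a') e + h (s ⊓ s') (a ⊓ a') e)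
    (hid : ∀ s₁ s₂ a₁ a₂ e₁ e₂, s₁ ≤ s₂ → a₁ ≤ a₂ → e₁ ≤ e₂ →
      h s₁ a₁ e₂ - h s₁ a₁ e₁ ≤ h s₂ a₂ e₂ - h s₂ a₂ e₁) :
    ∀ s₁ s₂ e₁ e₂, s₁ ≤ s₂ → e₁ ≤ e₂ →
      sSup ((fun a => h s₁ a e₂) '' Γ s₁) - sSup ((fun a => h s₁ a e₁) '' Γ s₁) ≤
      sSup ((fun a => h s₂ a e₂) '' Γ s₂) - sSup ((fun a => h s₂ a e₁) '' Γ s₂) := by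
  intro s₁ s₂ e₁ e₂ hs he
  obtain ⟨C, hC⟩ := hbdd
  have hbdda : ∀ s e, BddAbove ((fun a => h s a e) '' Γ s) := by
    intro s e
    exact ⟨C, fun x ⟨a, ha, hax⟩ => hax ▸ (abs_le.mp (hC s a e)).2⟩
  have hne : ∀ s e, ((fun a => h s a e) '' Γ s).Nonempty := fun s e =>
    (hΓne s).image _
  rw [sub_le_sub_iff]
  have key : ∀ a₁ ∈ Γ s₁, ∀ a₂ ∈ Γ s₂,
      h s₁ a₁ e₂ + h s₂ a₂ e₁ ≤
      sSup ((fun a => h s₂ a e₂) '' Γ s₂) + sSup ((fun a => h s₁ a e₁) '' Γ s₁) := by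
    intro a₁ ha₁ a₂ ha₂
    obtain ⟨hmem_sup, hmem_inf⟩ := hΓsuper s₁ s₂ a₁ a₂ ha₁ ha₂
    rw [sup_eq_right.mpr hs] at hmem_sup
    rw [inf_eq_left.mpr hs] at hmem_inf
    have h1 : h s₁ a₁ e₂ - h s₁ a₁ e₁ ≤ h s₂ (a₁ ⊔ a₂) e₂ - h s₂ (a₁ ⊔ a₂) e₁ :=
      hid s₁ s₂ a₁ (a₁ ⊔ a₂) e₁ e₂ hs le_sup_left he
    have h2 : h s₁ a₁ e₁ + h s₂ a₂ e₁ ≤ h s₂ (a₁ ⊔ a₂) e₁ + h s₁ (a₁ ⊓ a₂) e₁ := by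
      have := hsuper e₁ s₁ s₂ a₁ a₂
      rwa [sup_eq_right.mpr hs, inf_eq_left.mpr hs] at this
    have h3 : h s₂ (a₁ ⊔ a₂) e₂ ≤ sSup ((fun a => h s₂ a e₂) '' Γ s₂) :=
      le_csSup (hbdda s₂ e₂) ⟨_, hmem_sup, rfl⟩
    have h4 : h s₁ (a₁ ⊓ a₂) e₁ ≤ sSup ((fun a => h s₁ a e₁) '' Γ s₁) :=
      le_csSup (hbdda s₁ e₁) ⟨_, hmem_inf, rfl⟩
    linarith
  have step : sSup ((fun a => h s₁ a e₂) '' Γ s₁) ≤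
      sSup ((fun a => h s₂ a e₂) '' Γ s₂) + sSup ((fun a => h s₁ a e₁) '' Γ s₁) -
        sSup ((fun a => h s₂ a e₁) '' Γ s₂) := by
    refine csSup_le (hne s₁ e₂) ?_
    rintro x ⟨a₁, ha₁, rfl⟩
    have step2 : sSup ((fun a => h s₂ a e₁) '' Γ s₂) ≤
        sSup ((fun a => h s₂ a e₂) '' Γ s₂) + sSup ((fun a => h s₁ a e₁) '' Γ s₁) -
          h s₁ a₁ e₂ := by
      refine csSup_le (hne s₂ e₁) ?_
      rintro y ⟨a₂, ha₂, rfl⟩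
      have := key a₁ ha₁ a₂ ha₂
      simp only []
      linarith
    linarith
  linarith
end

section
/- Let T be a β-contraction (β ∈ (0,1)) on the complete metric space of bounded functions with supremum metric d, with fixed point V. Suppose a sequence f_k of bounded functions satisfies d(f_{k+1}, T f_k) ≤ δ for all k and some δ > 0. Then limsup_{k→∞} d(f_k, V) ≤ δ/(1−β). -/
lemma bdd_diff {S : Type*} {g h : S → ℝ} (hg : ∃ C, ∀ s, |g s| ≤ C)
    (hh : ∃ C, ∀ s, |h s| ≤ C) : BddAbove (Set.range fun s => |g s - h s|) := by
  obtain ⟨C1, h1⟩ := hg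
  obtain ⟨C2, h2⟩ := hh
  refine ⟨C1 + C2, ?_⟩
  rintro x ⟨s, rfl⟩
  calc |g s - h s| ≤ |g s| + |h s| := abs_sub _ _
    _ ≤ C1 + C2 := add_le_add (h1 s) (h2 s)

/-- Approximate value iteration error bound: if `T` is a `β`-contraction on
bounded functions (sup metric) with bounded fixed point `V`, and the bounded
functions `f_k` satisfy `d∞(f_{k+1}, T f_k) ≤ δ`, then
`limsup_k d∞(f_k, V) ≤ δ / (1 - β)`. -/
theorem stmt18 {S : Type*} [Nonempty S] (T : (S → ℝ) → (S → ℝ)) (β : ℝ)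
    (hβ0 : 0 < β) (hβ1 : β < 1)
    (hbdd : ∀ f : S → ℝ, (∃ C, ∀ s, |f s| ≤ C) → ∃ C, ∀ s, |T f s| ≤ C)
    (hcontr : ∀ f g : S → ℝ, (∃ C, ∀ s, |f s| ≤ C) → (∃ C, ∀ s, |g s| ≤ C) →
      (⨆ s, |T f s - T g s|) ≤ β * ⨆ s, |f s - g s|)
    (V : S → ℝ) (hVbdd : ∃ C, ∀ s, |V s| ≤ C) (hVfix : T V = V)
    (f : ℕ → S → ℝ) (hf : ∀ k, ∃ C, ∀ s, |f k s| ≤ C)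
    (δ : ℝ) (hδ : 0 < δ)
    (happrox : ∀ k, (⨆ s, |f (k + 1) s - T (f k) s|) ≤ δ) :
    Filter.limsup (fun k => ⨆ s, |f k s - V s|) Filter.atTop ≤ δ / (1 - β) := by
  set a : ℕ → ℝ := fun k => ⨆ s, |f k s - V s| with ha
  have h1β : 0 < 1 - β := by linarith
  have hanonneg : ∀ k, 0 ≤ a k := fun k =>
    Real.iSup_nonneg (fun s => abs_nonneg _)
  -- key recursive bound
  have hrec : ∀ k, a (k + 1) ≤ δ + β * a k := by
    intro k
    apply Real.iSup_le _ (by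
      have := hanonneg k
      have : 0 ≤ β * a k := mul_nonneg hβ0.le this
      linarith)
    intro s
    have step1 : |f (k + 1) s - T (f k) s| ≤ δ := by
      refine le_trans (le_ciSup (bdd_diff (hf (k+1)) (hbdd (f k) (hf k))) s) (happrox k)
    have step2 : |T (f k) s - V s| ≤ β * a k := by
      have hb : BddAbove (Set.range fun s => |T (f k) s - T V s|) := by
        rw [hVfix]; exact bdd_diff (hbdd (f k) (hf k)) hVbdd
      have := le_ciSup hb s
      have h2 := hcontr (f k) V (hf k) hVbdd
      rw [hVfix] at this h2
      exact le_trans this h2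
    calc |f (k + 1) s - V s| ≤ |f (k + 1) s - T (f k) s| + |T (f k) s - V s| := by
          have := abs_sub_le (f (k+1) s) (T (f k) s) (V s); linarith
      _ ≤ δ + β * a k := add_le_add step1 step2
  -- geometric bound
  have hgeo : ∀ k, a k ≤ β ^ k * a 0 + δ / (1 - β) := by
    intro k
    induction k with
    | zero => simp; positivity
    | succ n ih =>
      have := hrec n
      have hβa : β * a n ≤ β * (β ^ n * a 0 + δ / (1 - β)) :=
        mul_le_mul_of_nonneg_left ih hβ0.le
      have key : δ + β * (δ / (1 - β)) = δ / (1 - β) := by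
        field_simp; ring
      calc a (n + 1) ≤ δ + β * a n := this
        _ ≤ δ + β * (β ^ n * a 0 + δ / (1 - β)) := by linarith
        _ = β ^ (n+1) * a 0 + (δ + β * (δ / (1 - β))) := by ring
        _ = β ^ (n+1) * a 0 + δ / (1 - β) := by rw [key]
  -- limsup
  have htend : Filter.Tendsto (fun k => β ^ k * a 0 + δ / (1 - β)) Filter.atTop
      (nhds (δ / (1 - β))) := by
    have h0 : Filter.Tendsto (fun k => β ^ k * a 0) Filter.atTop (nhds 0) := by
      have := tendsto_pow_atTop_nhds_zero_of_lt_one hβ0.le hβ1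
      simpa using this.mul_const (a 0)
    simpa using h0.add tendsto_const_nhds
  have hcb : Filter.IsCoboundedUnder (· ≤ ·) Filter.atTop a :=
    Filter.isCoboundedUnder_le_of_eventually_le Filter.atTop (x := 0)
      (Filter.Eventually.of_forall hanonneg)
  have hbd : Filter.IsBoundedUnder (· ≤ ·) Filter.atTop
      (fun k => β ^ k * a 0 + δ / (1 - β)) := htend.isBoundedUnder_le
  calc Filter.limsup a Filter.atTop
      ≤ Filter.limsup (fun k => β ^ k * a 0 + δ / (1 - β)) Filter.atTop :=
        Filter.limsup_le_limsup (Filter.Eventually.of_forall hgeo) hcb hbd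
    _ = δ / (1 - β) := htend.limsup_eq
end
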